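/- arXiv:2411.14814 — 4 statements merged into one kernel-verified Lean document; each statement's English description precedes it below -/
import Mathlib

section
/- Let A be an abelian group with subgroups A₀ and A₁ such that A₀ + A₁ = A, let G be a finite group acting on A by automorphisms ρ : G → Aut(A) such that ρ(g) restricts to the identity on A₀ and ρ(g)(A₁) ⊆ A₁ for all g, and let τ : G → A be a 1-cocycle (τ(gh) = ρ(g)(τ(h)) + τ(g)). Let K₀ = {a₀ ∈ A₀ | ∃ a₁ ∈ A₁, a₀ + a₁ = 0}. Then for any choice of decompositions τ(g) = t_g⁰ + t_g¹ with t_g⁰ ∈ A₀, t_g¹ ∈ A₁, the formula g · (a₀ + K₀) = a₀ + t_g⁰ + K₀ defines an action of G on the quotient group A₀/K₀, independent of the choices. -/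
/-!
Since `a + b = 0` forces `b = -a`, the subgroup `K₀` is just `A₀ ⊓ A₁`. Every element in question
lies in `A₀`, and modulo `A₁` each `t g` agrees with `τ g`; the cocycle identity, together with
`ρ g` fixing `A₀` and preserving `A₁`, then places the defect `t (g * h) - t g - t h` in `A₁`.
-/

section

variable {A : Type*} [AddCommGroup A]

theorem AddSubgroup.setOf_mem_and_exists_add_eq_zero (A₀ A₁ : AddSubgroup A) :
    {a | a ∈ A₀ ∧ ∃ b ∈ A₁, a + b = 0} = ((A₀ ⊓ A₁ : AddSubgroup A) : Set A) := by
  ext a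
  simp only [Set.mem_ofPred_eq, SetLike.mem_coe, AddSubgroup.mem_inf, add_eq_zero_iff_eq_neg',
    exists_eq_right, neg_mem_iff]

theorem cocycle_map_one {G : Type*} [MulOneClass G] (ρ : G → AddAut A) (τ : G → A)
    (hτ : ∀ g h : G, τ (g * h) = ρ g (τ h) + τ g) : τ 1 = 0 := by
  have h := hτ 1 1
  rw [one_mul, right_eq_add] at h
  exact (map_eq_zero_iff (ρ 1) (ρ 1).injective).mp h

theorem cocycle_defect_mem {G : Type*} [Mul G] (A₀ A₁ : AddSubgroup A) (ρ : G → AddAut A)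
    (hρ0 : ∀ g : G, ∀ a ∈ A₀, ρ g a = a) (hρ1 : ∀ g : G, ∀ a ∈ A₁, ρ g a ∈ A₁)
    (τ : G → A) (hτ : ∀ g h : G, τ (g * h) = ρ g (τ h) + τ g)
    (t : G → A) (ht0 : ∀ g, t g ∈ A₀) (ht1 : ∀ g, τ g - t g ∈ A₁) (g h : G) :
    t (g * h) - t g - t h ∈ A₁ := by
  have key : t (g * h) - t g - t h
      = -((τ (g * h) - t (g * h)) - ρ g (τ h - t h) - (τ g - t g)) := by
    rw [hτ, map_sub, hρ0 g (t h) (ht0 h)]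
    abel
  rw [key]
  exact neg_mem (sub_mem (sub_mem (ht1 _) (hρ1 g _ (ht1 h))) (ht1 g))

end

theorem translation_action_on_quotient_well_defined_general
    (A : Type*) [AddCommGroup A] (G : Type*) [Group G]
    (A₀ A₁ : AddSubgroup A)
    (ρ : G →* Multiplicative (AddAut A))
    (hρ0 : ∀ g : G, ∀ a ∈ A₀, Multiplicative.toAdd (ρ g) a = a)
    (hρ1 : ∀ g : G, ∀ a ∈ A₁, Multiplicative.toAdd (ρ g) a ∈ A₁)
    (τ : G → A)
    (hτ : ∀ g h : G, τ (g * h) = Multiplicative.toAdd (ρ g) (τ h) + τ g)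
    (K₀ : Set A) (hK₀ : K₀ = {a | a ∈ A₀ ∧ ∃ b ∈ A₁, a + b = 0})
    (t s : G → A)
    (ht0 : ∀ g, t g ∈ A₀) (ht1 : ∀ g, τ g - t g ∈ A₁)
    (hs0 : ∀ g, s g ∈ A₀) (hs1 : ∀ g, τ g - s g ∈ A₁) :
    t 1 ∈ K₀ ∧ (∀ g h : G, t (g * h) - t g - t h ∈ K₀) ∧ (∀ g : G, t g - s g ∈ K₀) := by
  subst hK₀
  simp only [AddSubgroup.setOf_mem_and_exists_add_eq_zero, SetLike.mem_coe, AddSubgroup.mem_inf]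
  refine ⟨⟨ht0 1, ?_⟩, fun g h => ⟨?_, ?_⟩, fun g => ⟨sub_mem (ht0 g) (hs0 g), ?_⟩⟩
  · simpa [cocycle_map_one _ τ hτ] using ht1 1
  · exact sub_mem (sub_mem (ht0 _) (ht0 g)) (ht0 h)
  · exact cocycle_defect_mem A₀ A₁ _ hρ0 hρ1 τ hτ t ht0 ht1 g h
  · simpa only [sub_sub_sub_cancel_left] using sub_mem (hs1 g) (ht1 g)

/-- Given an abelian group A = A₀ + A₁ with a G-action that is trivial on A₀ and
preserves A₁, and a 1-cocycle τ with decompositions τ(g) = t_g⁰ + t_g¹, the formula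
g · (a₀ + K₀) = a₀ + t_g⁰ + K₀ defines an action of G on A₀/K₀, independent of choices. -/
theorem translation_action_on_quotient_well_defined
    (A : Type*) [AddCommGroup A] (G : Type*) [Group G] [Finite G]
    (A₀ A₁ : AddSubgroup A) (hsum : A₀ ⊔ A₁ = ⊤)
    (ρ : G →* Multiplicative (AddAut A))
    (hρ0 : ∀ g : G, ∀ a ∈ A₀, Multiplicative.toAdd (ρ g) a = a)
    (hρ1 : ∀ g : G, ∀ a ∈ A₁, Multiplicative.toAdd (ρ g) a ∈ A₁)
    (τ : G → A)
    (hτ : ∀ g h : G, τ (g * h) = Multiplicative.toAdd (ρ g) (τ h) + τ g)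
    (K₀ : Set A) (hK₀ : K₀ = {a | a ∈ A₀ ∧ ∃ b ∈ A₁, a + b = 0})
    (t s : G → A)
    (ht0 : ∀ g, t g ∈ A₀) (ht1 : ∀ g, τ g - t g ∈ A₁)
    (hs0 : ∀ g, s g ∈ A₀) (hs1 : ∀ g, τ g - s g ∈ A₁) :
    t 1 ∈ K₀ ∧ (∀ g h : G, t (g * h) - t g - t h ∈ K₀) ∧ (∀ g : G, t g - s g ∈ K₀) :=
  translation_action_on_quotient_well_defined_general A G A₀ A₁ ρ hρ0 hρ1 τ hτ K₀ hK₀ t s ht0 ht1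
    hs0 hs1
end

section
/- In the setting of the previous statement, the set H = {g ∈ G | t_g⁰ ∈ K₀} is a well-defined subgroup of G, independent of the choice of the decomposition τ(g) = t_g⁰ + t_g¹. -/
/-! `t g ∈ K₀` holds exactly when `τ g ∈ A₁`, whatever the decomposition: `t g` and `τ g` differ
by an element of `A₁`, and an element of `A₀` lies in `K₀` iff it lies in `A₁`. The set of `g`
with `τ g ∈ A₁` is a subgroup by the cocycle identity and the `G`-stability of `A₁`. -/

section

variable {A G : Type*} [AddCommGroup A] [Group G]

theorem AddSubgroup.mem_and_exists_add_eq_zero_iff {A₀ : AddSubgroup A} (A₁ : AddSubgroup A)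
    {a x : A} (ha : a ∈ A₀) (hxa : x - a ∈ A₁) :
    (a ∈ A₀ ∧ ∃ b ∈ A₁, a + b = 0) ↔ x ∈ A₁ := by
  have exists_neg_iff : (∃ b ∈ A₁, a + b = 0) ↔ a ∈ A₁ :=
    ⟨fun ⟨b, hb, hab⟩ => eq_neg_of_add_eq_zero_left hab ▸ A₁.neg_mem hb,
      fun h => ⟨-a, A₁.neg_mem h, add_neg_cancel a⟩⟩
  rw [and_iff_right ha, exists_neg_iff, ← sub_add_cancel x a, A₁.add_mem_cancel_left hxa]

section Cocycle

variable {ρ : G →* Multiplicative (AddAut A)} {τ : G → A}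
  (hτ : ∀ g h : G, τ (g * h) = Multiplicative.toAdd (ρ g) (τ h) + τ g)
include hτ

theorem cocycle_map_one_s6 : τ 1 = 0 := by
  simpa using hτ 1 1

theorem cocycle_map_inv (g : G) : τ g⁻¹ = -Multiplicative.toAdd (ρ g⁻¹) (τ g) := by
  rw [eq_neg_iff_add_eq_zero, add_comm, ← hτ, inv_mul_cancel, cocycle_map_one_s6 hτ]

variable (A₁ : AddSubgroup A)
  (hρ : ∀ g : G, ∀ a ∈ A₁, Multiplicative.toAdd (ρ g) a ∈ A₁)

def cocyclePreimage : Subgroup G where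
  carrier := {g | τ g ∈ A₁}
  one_mem' := by simp [cocycle_map_one_s6 hτ]
  mul_mem' {g h} hg hh := by
    show τ (g * h) ∈ A₁
    exact hτ g h ▸ A₁.add_mem (hρ g _ hh) hg
  inv_mem' {g} hg := by
    show τ g⁻¹ ∈ A₁
    exact cocycle_map_inv hτ g ▸ A₁.neg_mem (hρ g⁻¹ _ hg)

theorem mem_cocyclePreimage {g : G} : g ∈ cocyclePreimage hτ A₁ hρ ↔ τ g ∈ A₁ :=
  Iff.rfl

end Cocycle

end

theorem H_is_well_defined_subgroup_general
    (A : Type*) [AddCommGroup A] (G : Type*) [Group G]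
    (A₀ A₁ : AddSubgroup A)
    (ρ : G →* Multiplicative (AddAut A))
    (hρ1 : ∀ g : G, ∀ a ∈ A₁, Multiplicative.toAdd (ρ g) a ∈ A₁)
    (τ : G → A)
    (hτ : ∀ g h : G, τ (g * h) = Multiplicative.toAdd (ρ g) (τ h) + τ g)
    (K₀ : Set A) (hK₀ : K₀ = {a | a ∈ A₀ ∧ ∃ b ∈ A₁, a + b = 0})
    (t s : G → A)
    (ht0 : ∀ g, t g ∈ A₀) (ht1 : ∀ g, τ g - t g ∈ A₁)
    (hs0 : ∀ g, s g ∈ A₀) (hs1 : ∀ g, τ g - s g ∈ A₁) :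
    (1 : G) ∈ {g : G | t g ∈ K₀} ∧
    (∀ g h : G, g ∈ {g : G | t g ∈ K₀} → h ∈ {g : G | t g ∈ K₀} →
      g * h ∈ {g : G | t g ∈ K₀}) ∧
    (∀ g : G, g ∈ {g : G | t g ∈ K₀} → g⁻¹ ∈ {g : G | t g ∈ K₀}) ∧
    (∀ g : G, t g ∈ K₀ ↔ s g ∈ K₀) := by
  let H := cocyclePreimage hτ A₁ hρ1
  have mem_K₀_iff {u : G → A} (hu0 : ∀ g, u g ∈ A₀) (hu1 : ∀ g, τ g - u g ∈ A₁) (g : G) :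
      u g ∈ K₀ ↔ g ∈ H :=
    hK₀ ▸ (AddSubgroup.mem_and_exists_add_eq_zero_iff A₁ (hu0 g) (hu1 g)).trans
      (mem_cocyclePreimage ..).symm
  simp only [Set.mem_ofPred_eq, mem_K₀_iff ht0 ht1, mem_K₀_iff hs0 hs1, iff_self, implies_true,
    and_true]
  exact ⟨H.one_mem, fun _ _ => H.mul_mem, fun _ => H.inv_mem⟩

/-- In the setting of the cocycle decomposition, H = {g ∈ G | t_g⁰ ∈ K₀} is a
well-defined subgroup of G, independent of the choice of decomposition. -/
theorem H_is_well_defined_subgroup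
    (A : Type*) [AddCommGroup A] (G : Type*) [Group G] [Finite G]
    (A₀ A₁ : AddSubgroup A) (hsum : A₀ ⊔ A₁ = ⊤)
    (ρ : G →* Multiplicative (AddAut A))
    (hρ0 : ∀ g : G, ∀ a ∈ A₀, Multiplicative.toAdd (ρ g) a = a)
    (hρ1 : ∀ g : G, ∀ a ∈ A₁, Multiplicative.toAdd (ρ g) a ∈ A₁)
    (τ : G → A)
    (hτ : ∀ g h : G, τ (g * h) = Multiplicative.toAdd (ρ g) (τ h) + τ g)
    (K₀ : Set A) (hK₀ : K₀ = {a | a ∈ A₀ ∧ ∃ b ∈ A₁, a + b = 0})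
    (t s : G → A)
    (ht0 : ∀ g, t g ∈ A₀) (ht1 : ∀ g, τ g - t g ∈ A₁)
    (hs0 : ∀ g, s g ∈ A₀) (hs1 : ∀ g, τ g - s g ∈ A₁) :
    (1 : G) ∈ {g : G | t g ∈ K₀} ∧
    (∀ g h : G, g ∈ {g : G | t g ∈ K₀} → h ∈ {g : G | t g ∈ K₀} →
      g * h ∈ {g : G | t g ∈ K₀}) ∧
    (∀ g : G, g ∈ {g : G | t g ∈ K₀} → g⁻¹ ∈ {g : G | t g ∈ K₀}) ∧
    (∀ g : G, t g ∈ K₀ ↔ s g ∈ K₀) :=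
  H_is_well_defined_subgroup_general A G A₀ A₁ ρ hρ1 τ hτ K₀ hK₀ t s ht0 ht1 hs0 hs1
end

section
/- Let A be an abelian group written as A = (A₀ × A₁)/K for subgroups as above, and suppose a cyclic group G = ⟨g⟩ of order n acts on A by g((a₀,a₁)+K) = (a₀ + t₀, α(a₁)) + K, where α : A₁ → A₁ is an automorphism such that α^m - id is surjective (onto A₁) for all 1 ≤ m < n. If the action of G on A is free, then m·t₀ ∉ K₀ for all 1 ≤ m < n, where K₀ is the image of K under the first projection. -/
/-!
If `m • t₀ = k.1` for some `k ∈ K`, surjectivity of `α^m - id` gives `a` with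
`α^m a - a = k.2`. Then `(0, a)` is moved by `g^m` exactly by `k`, so it is a fixed point of
`g^m` on `(A₀ × A₁) ⧸ K`, and freeness forces `n ∣ m`, which is impossible for `0 < m < n`.
-/

open Function

lemma exists_prodMap_add_iterate_sub_mem {A₀ A₁ : Type*} [AddCommGroup A₀] [AddCommGroup A₁]
    {K : AddSubgroup (A₀ × A₁)} {t : A₀} {f : A₁ → A₁} {m : ℕ}
    (hf : Surjective fun a => f^[m] a - a) (ht : m • t ∈ Prod.fst '' (K : Set (A₀ × A₁))) :
    ∃ x, (Prod.map (· + t) f)^[m] x - x ∈ K := by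
  obtain ⟨k, hk, hk₁⟩ := ht
  obtain ⟨a, ha⟩ := hf k.2
  suffices h : (Prod.map (· + t) f)^[m] (0, a) - (0, a) = k from ⟨(0, a), h ▸ hk⟩
  ext
  · simp [Prod.map_iterate, hk₁]
  · simpa [Prod.map_iterate] using ha

theorem free_action_implies_translation_nontorsion_general
    (A₀ A₁ : Type*) [AddCommGroup A₀] [AddCommGroup A₁]
    (K : AddSubgroup (A₀ × A₁))
    (n : ℕ)
    (t₀ : A₀) (α : A₁ ≃+ A₁)
    (hα : ∀ m : ℕ, 1 ≤ m → m < n →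
      Function.Surjective (fun a : A₁ => (⇑α)^[m] a - a))
    (g : A₀ × A₁ → A₀ × A₁) (hg : g = fun x => (x.1 + t₀, α x.2))
    (hfree : ∀ (m : ℕ) (x : A₀ × A₁), g^[m] x - x ∈ K → n ∣ m) :
    ∀ m : ℕ, 1 ≤ m → m < n → m • t₀ ∉ Prod.fst '' (K : Set (A₀ × A₁)) := by
  intro m hm hmn ht
  have hg' : g = Prod.map (· + t₀) α := hg
  obtain ⟨x, hx⟩ := exists_prodMap_add_iterate_sub_mem (hα m hm hmn) ht
  rw [← hg'] at hx
  exact hmn.not_ge (Nat.le_of_dvd hm (hfree m x hx))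

/-- If a cyclic group of order n acts on A = (A₀ × A₁)/K via
g((a₀,a₁) + K) = (a₀ + t₀, α(a₁)) + K with α^m - id surjective for 1 ≤ m < n,
and the action is free, then m·t₀ ∉ K₀ for 1 ≤ m < n, where K₀ is the image of K
under the first projection. -/
theorem free_action_implies_translation_nontorsion
    (A₀ A₁ : Type*) [AddCommGroup A₀] [AddCommGroup A₁]
    (K : AddSubgroup (A₀ × A₁))
    (hK1 : ∀ x ∈ K, x.1 = 0 → x = 0)
    (hK2 : ∀ x ∈ K, x.2 = 0 → x = 0)
    (n : ℕ) (hn : 0 < n)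
    (t₀ : A₀) (α : A₁ ≃+ A₁)
    (hα : ∀ m : ℕ, 1 ≤ m → m < n →
      Function.Surjective (fun a : A₁ => (⇑α)^[m] a - a))
    (g : A₀ × A₁ → A₀ × A₁) (hg : g = fun x => (x.1 + t₀, α x.2))
    (hfree : ∀ (m : ℕ) (x : A₀ × A₁), g^[m] x - x ∈ K → n ∣ m) :
    ∀ m : ℕ, 1 ≤ m → m < n → m • t₀ ∉ Prod.fst '' (K : Set (A₀ × A₁)) :=
  free_action_implies_translation_nontorsion_general A₀ A₁ K n t₀ α hα g hg hfree
end

section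
/- Let A = (E_{τ₀} × E_{τ₁} × E_i)/K with K generated by (1/2, 1/2, 0), and let g be the automorphism of A induced by (z₀,z₁,z₂) ↦ (z₀ + 1/4, -z₁, iz₂). Then g has order 4 in Bihol(A) and the group ⟨g⟩ acts freely on A. -/
open Complex

/-- The lattice ℤ + τℤ in ℂ. -/
noncomputable def lattice (τ : ℂ) : AddSubgroup ℂ := AddSubgroup.closure {1, τ}

/-- The complex torus ℂ/(ℤ + τℤ). -/
abbrev Torus (τ : ℂ) := ℂ ⧸ lattice τ

/-- Multiplication by i preserves the square lattice ℤ + iℤ. -/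
lemma mulLeft_I_maps_lattice : ∀ x ∈ lattice I, I * x ∈ lattice I := by
  intro x hx
  induction hx using AddSubgroup.closure_induction with
  | mem y hy =>
    rcases hy with hy | hy
    · subst hy
      rw [mul_one]; exact AddSubgroup.subset_closure (by simp : I ∈ ({1, I} : Set ℂ))
    · simp only [Set.mem_singleton_iff] at hy
      subst hy
      rw [Complex.I_mul_I]
      exact AddSubgroup.neg_mem _
        (AddSubgroup.subset_closure (by simp : (1 : ℂ) ∈ ({1, I} : Set ℂ)))
  | zero => simpa using (AddSubgroup.zero_mem (lattice I))
  | add a b _ _ ha hb => simpa [mul_add] using AddSubgroup.add_mem _ ha hb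
  | neg a _ ha => simpa using AddSubgroup.neg_mem _ ha

/-- Multiplication by i descended to the torus ℂ/(ℤ + iℤ). -/
noncomputable def mulI : Torus I → Torus I :=
  QuotientAddGroup.map (lattice I) (lattice I) (AddMonoidHom.mulLeft I)
    (fun x hx => mulLeft_I_maps_lattice x hx)

/-- The lift to E₀ × E₁ × E_i of the automorphism
(z₀,z₁,z₂) ↦ (z₀ + 1/4, -z₁, iz₂). -/
noncomputable def gLift (τ₀ τ₁ : ℂ) :
    Torus τ₀ × Torus τ₁ × Torus I → Torus τ₀ × Torus τ₁ × Torus I :=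
  fun p => (p.1 + QuotientAddGroup.mk (1 / 4 : ℂ), (-p.2.1, mulI p.2.2))

/-!
Since `0 < Im τ`, a real number lies in `ℤ + τℤ` only if it is an integer, so `e = 1/4` has
order exactly `4` in `E_τ`, and `K` is generated by `(2e, 2e, 0)`. On the cover,
`g^m (z₀, z₁, z₂) - (z₀, z₁, z₂) = (m e, ((-1)^m - 1) z₁, (i^m - 1) z₂)`, which vanishes for
`m = 4`. If it equals `n (2e, 2e, 0)`, the first coordinate gives `2n ≡ m (mod 4)`, impossible for
odd `m`; for `m = 2` the second coordinate gives `2n ≡ 0 (mod 4)`, contradicting `2n ≡ 2`.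
-/

lemma mem_lattice_iff {τ x : ℂ} : x ∈ lattice τ ↔ ∃ a b : ℤ, (a : ℂ) + b * τ = x := by
  simp [lattice, AddSubgroup.mem_closure_pair, zsmul_eq_mul]

lemma ofReal_mem_lattice_iff {τ : ℂ} (hτ : 0 < τ.im) (x : ℝ) :
    (x : ℂ) ∈ lattice τ ↔ ∃ n : ℤ, (n : ℝ) = x := by
  rw [mem_lattice_iff]
  constructor
  · rintro ⟨a, b, hab⟩
    have hb : (b : ℝ) * τ.im = 0 := by simpa using (congrArg Complex.im hab).symm
    have hb0 : (b : ℝ) = 0 := (mul_eq_zero.1 hb).resolve_right hτ.ne'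
    exact ⟨a, by simpa [hb0] using congrArg Complex.re hab⟩
  · rintro ⟨n, rfl⟩
    exact ⟨n, 0, by simp⟩

lemma zsmul_one_div_eq_zero_iff {τ : ℂ} (hτ : 0 < τ.im) {d : ℕ} (hd : d ≠ 0) (k : ℤ) :
    k • ((1 / d : ℂ) : Torus τ) = 0 ↔ (d : ℤ) ∣ k := by
  have hk : (k : ℂ) * (1 / d) = ((k / d : ℝ) : ℂ) := by push_cast; ring
  rw [← QuotientAddGroup.mk_zsmul, zsmul_eq_mul, hk, QuotientAddGroup.eq_zero_iff,
    ofReal_mem_lattice_iff hτ]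
  have hd' : (d : ℝ) ≠ 0 := Nat.cast_ne_zero.2 hd
  constructor
  · rintro ⟨n, hn⟩
    refine ⟨n, ?_⟩
    rw [eq_div_iff hd'] at hn
    exact_mod_cast hn.symm.trans (mul_comm _ _)
  · rintro ⟨n, rfl⟩
    exact ⟨n, by push_cast; field_simp⟩

lemma zsmul_quarter_eq_zsmul_quarter_iff {τ : ℂ} (hτ : 0 < τ.im) (a b : ℤ) :
    a • ((1 / 4 : ℂ) : Torus τ) = b • ((1 / 4 : ℂ) : Torus τ) ↔ (4 : ℤ) ∣ a - b := by
  rw [← sub_eq_zero, ← sub_smul]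
  exact_mod_cast zsmul_one_div_eq_zero_iff hτ (d := 4) four_ne_zero (a - b)

lemma mk_half_eq_two_zsmul_quarter (τ : ℂ) :
    ((1 / 2 : ℂ) : Torus τ) = (2 : ℤ) • ((1 / 4 : ℂ) : Torus τ) := by
  rw [← QuotientAddGroup.mk_zsmul]
  norm_num

lemma mulI_mk (z : ℂ) : mulI (z : Torus I) = ((I * z : ℂ) : Torus I) := rfl

lemma mulI_iterate_four : mulI^[4] = id := by
  funext w
  induction w using QuotientAddGroup.induction_on with
  | H z =>
    have hI : I * (I * (I * (I * z))) = z := by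
      linear_combination (I ^ 2 - 1) * z * I_sq
    simp only [Function.iterate_succ, Function.iterate_zero, Function.comp_apply, id_eq, mulI_mk,
      hI]

lemma gLift_iterate (τ₀ τ₁ : ℂ) (m : ℕ) (x : Torus τ₀) (y : Torus τ₁) (z : Torus I) :
    (gLift τ₀ τ₁)^[m] (x, y, z) =
      (x + (m : ℤ) • ((1 / 4 : ℂ) : Torus τ₀), ((-1 : ℤ) ^ m) • y, mulI^[m] z) := by
  induction m with
  | zero => simp
  | succ m ih =>
    rw [Function.iterate_succ_apply', ih, Function.iterate_succ_apply']
    simp [gLift, pow_succ, add_zsmul, add_assoc]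

/-- In the Lean statement, `g` acts on the cover `E_{τ₀} × E_{τ₁} × E_i`; `g^m` is the identity,
resp. fixed-point free, on `A` iff `g^m p - p` lies in `K` for every `p`, resp. for no `p`. -/
theorem order_four_free_action
    (τ₀ τ₁ : ℂ) (h₀ : 0 < τ₀.im) (h₁ : 0 < τ₁.im)
    (K : AddSubgroup (Torus τ₀ × Torus τ₁ × Torus I))
    (hK : K = AddSubgroup.closure
      {((QuotientAddGroup.mk (1 / 2 : ℂ) : Torus τ₀),
        ((QuotientAddGroup.mk (1 / 2 : ℂ) : Torus τ₁), (0 : Torus I)))}) :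
    (∀ p, (gLift τ₀ τ₁)^[4] p - p ∈ K) ∧
    (∀ p, ∀ m : ℕ, 1 ≤ m → m ≤ 3 → (gLift τ₀ τ₁)^[m] p - p ∉ K) := by
  subst hK
  constructor
  · rintro ⟨x, y, z⟩
    have hx : ((4 : ℕ) : ℤ) • ((1 / 4 : ℂ) : Torus τ₀) = 0 := by
      simpa using (zsmul_quarter_eq_zsmul_quarter_iff h₀ 4 0).2 (by norm_num)
    rw [gLift_iterate, mulI_iterate_four, hx]
    simp
  · rintro ⟨x, y, z⟩ m hm1 hm3 hmem
    obtain ⟨n, hn⟩ := AddSubgroup.mem_closure_singleton.1 hmem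
    rw [gLift_iterate, mk_half_eq_two_zsmul_quarter, mk_half_eq_two_zsmul_quarter] at hn
    simp only [Prod.smul_mk, Prod.mk_sub_mk, add_sub_cancel_left, smul_smul, Prod.mk.injEq] at hn
    obtain ⟨hfst, hsnd, -⟩ := hn
    have h4₀ := (zsmul_quarter_eq_zsmul_quarter_iff h₀ _ _).1 hfst
    interval_cases m
    · omega
    · have h4₁ := (zsmul_quarter_eq_zsmul_quarter_iff h₁ (n * 2) 0).1 (by simpa using hsnd)
      omega
    · omega
end
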